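/- Let F(x,q) = ∑_{s,t,u≥0} q^{s(s+1)/2 + t(t+1) + 3u(u+1)/2 + st + su + 2tu} x^{s+2t+3u} / ((q;q)_s (q;q)_t (q;q)_u). Then F satisfies F(x,q) = (1+xq)(1 + x²q² + x²q³) F(xq, q) − x⁴q⁷ (1+xq)(1+xq²) F(xq², q). -/

import Mathlib

open Finset PowerSeries

/-- `(q;q)_n = ∏_{0 ≤ j < n} (1 - q^{j+1})`. -/
noncomputable def qPoch (n : ℕ) : PowerSeries ℚ :=
  ∏ j ∈ Finset.range n, (1 - (PowerSeries.X : PowerSeries ℚ) ^ (j + 1))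

/-- The power series `q` in `ℚ⟦q⟧`. -/
noncomputable def qq : PowerSeries ℚ := PowerSeries.X

/-- `G(x,q) = ∑_{s ≥ 0} q^{s(s+1)} x^{2s} / (q;q)_s`, as an element of `ℚ⟦q⟧⟦x⟧`:
the coefficient of `x^n` is `q^{s(s+1)}/(q;q)_s` if `n = 2s`, and `0` otherwise. -/
noncomputable def Gser : PowerSeries (PowerSeries ℚ) :=
  PowerSeries.mk fun n =>
    if 2 ∣ n then qq ^ ((n / 2) * (n / 2 + 1)) * (qPoch (n / 2))⁻¹ else 0

/-- The coefficient `f_n` of `x^n` in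
`F(x,q) = ∑_{s,t,u ≥ 0} q^{s(s+1)/2 + t(t+1) + 3u(u+1)/2 + st + su + 2tu}
  x^{s+2t+3u}/((q;q)_s (q;q)_t (q;q)_u)`,
i.e. the (finite) sum over `s, t, u ≥ 0` with `s + 2t + 3u = n`. -/
noncomputable def fcoef (n : ℕ) : PowerSeries ℚ :=
  ∑ t ∈ Finset.range (n / 2 + 1), ∑ u ∈ Finset.range (n / 3 + 1),
    if 2 * t + 3 * u ≤ n then
      qq ^ ((n - 2 * t - 3 * u) * (n - 2 * t - 3 * u + 1) / 2 + t * (t + 1) +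
            3 * (u * (u + 1) / 2) + (n - 2 * t - 3 * u) * t +
            (n - 2 * t - 3 * u) * u + 2 * t * u) *
        (qPoch (n - 2 * t - 3 * u))⁻¹ * (qPoch t)⁻¹ * (qPoch u)⁻¹
    else 0

/-- `F(x,q)` as an element of `ℚ⟦q⟧⟦x⟧`. -/
noncomputable def Fser : PowerSeries (PowerSeries ℚ) :=
  PowerSeries.mk fcoef

/-!
Writing `s + 2t + 3u` with `j = t + u`, the summand of `F` factors as
`q^{j(j+1)} x^{2j}/(q;q)_j · q^{u(u+1)/2} [j choose u]_q x^u · q^{s(s+1)/2} (x q^j)^s/(q;q)_s`.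
Summing over `u` and `s` gives `∏_{m=1}^{j} (1 + x q^m) · E(x q^j) = E(x)` for Euler's series
`E(x) = ∑ q^{n(n+1)/2} x^n/(q;q)_n`, by the `q`-binomial theorem and `E(x) = (1 + x q) E(x q)`.
Hence `F = E · G` with `G(x) = ∑ q^{t(t+1)} x^{2t}/(q;q)_t`, which satisfies
`G(x) = (1 + x²q² + x²q³) G(x q) - x⁴q⁷ G(x q²)` coefficientwise; multiplying by
`E(x) = (1 + x q) E(x q) = (1 + x q)(1 + x q²) E(x q²)` gives the claim.
-/

theorem PowerSeries.algebraMap_ne_zero_of_constantCoeff_ne_zero {k : Type*} [Field k]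
    {f : k⟦X⟧} (h : constantCoeff f ≠ 0) :
    algebraMap k⟦X⟧ (FractionRing k⟦X⟧) f ≠ 0 :=
  (map_ne_zero_iff _ (IsFractionRing.injective _ _)).mpr (by rintro rfl; simp at h)

theorem PowerSeries.algebraMap_inv_of_constantCoeff_ne_zero {k : Type*} [Field k]
    {f : k⟦X⟧} (h : constantCoeff f ≠ 0) :
    algebraMap k⟦X⟧ (FractionRing k⟦X⟧) f⁻¹
      = (algebraMap k⟦X⟧ (FractionRing k⟦X⟧) f)⁻¹ :=
  eq_inv_of_mul_eq_one_right <| by rw [← map_mul, PowerSeries.mul_inv_cancel _ h, map_one]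

theorem Nat.succ_mul_succ_add_one_div_two (n : ℕ) :
    (n + 1) * (n + 1 + 1) / 2 = n * (n + 1) / 2 + (n + 1) := by
  rw [show (n + 1) * (n + 1 + 1) = n * (n + 1) + 2 * (n + 1) by ring]; omega

theorem PowerSeries.rescale_C {R : Type*} [CommSemiring R] (a c : R) :
    rescale a (C c) = C c := by
  ext n; rw [coeff_rescale, coeff_C]; split_ifs with h <;> simp [h]

theorem PowerSeries.rescale_one_add_C_mul_X {R : Type*} [CommRing R] (a c : R) :
    rescale a (1 + C c * X) = 1 + C (c * a) * X := by
  rw [map_add, map_one, map_mul, rescale_X, rescale_C, map_mul, mul_assoc]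

theorem sum_range_reindex_two_three {M : Type*} [AddCommMonoid M] (n : ℕ)
    (f : ℕ → ℕ → M) :
    ∑ t ∈ range (n / 2 + 1), ∑ u ∈ range (n / 3 + 1),
        (if 2 * t + 3 * u ≤ n then f t u else 0)
      = ∑ j ∈ range (n / 2 + 1), ∑ u ∈ range (n - 2 * j + 1),
          (if u ≤ j then f (j - u) u else 0) := by
  rw [← sum_product', ← sum_filter, sum_sigma', ← sum_filter]
  refine sum_nbij' (fun p => ⟨p.1 + p.2, p.2⟩) (fun x => (x.1 - x.2, x.2)) ?_ ?_ ?_ ?_ ?_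
  · simp only [mem_filter, mem_product, mem_sigma, mem_range, Prod.forall]; omega
  · simp only [mem_filter, mem_product, mem_sigma, mem_range, Sigma.forall]; omega
  · simp
  · simp only [mem_filter, mem_sigma, mem_range, Sigma.forall, Sigma.mk.injEq, heq_eq_eq,
      and_true]
    omega
  · simp

-- Identities between quotients by `q`-Pochhammer symbols are checked in the fraction field,
-- where `field_simp` applies.
local notation "ι" => algebraMap ℚ⟦X⟧ (FractionRing ℚ⟦X⟧)

theorem qPoch_succ (n : ℕ) : qPoch (n + 1) = qPoch n * (1 - qq ^ (n + 1)) :=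
  prod_range_succ _ _

theorem constantCoeff_qPoch (n : ℕ) : constantCoeff (qPoch n) = 1 := by
  simp [qPoch, map_prod]

theorem algebraMap_qPoch_ne_zero (n : ℕ) : ι (qPoch n) ≠ 0 :=
  algebraMap_ne_zero_of_constantCoeff_ne_zero (by simp [constantCoeff_qPoch])

theorem algebraMap_qPoch_inv (n : ℕ) : ι (qPoch n)⁻¹ = (ι (qPoch n))⁻¹ :=
  algebraMap_inv_of_constantCoeff_ne_zero (by simp [constantCoeff_qPoch])

theorem algebraMap_qPoch_succ (n : ℕ) :
    ι (qPoch (n + 1)) = ι (qPoch n) * (1 - ι qq ^ (n + 1)) := by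
  rw [qPoch_succ, map_mul, map_sub, map_one, map_pow]

theorem one_sub_algebraMap_qq_pow_ne_zero (n : ℕ) : 1 - ι qq ^ (n + 1) ≠ 0 := by
  rw [← map_pow, ← map_one ι, ← map_sub]
  exact algebraMap_ne_zero_of_constantCoeff_ne_zero (by simp [qq])

theorem qPoch_zero : qPoch 0 = 1 := prod_range_zero _

theorem qPoch_mul_inv (n : ℕ) : qPoch n * (qPoch n)⁻¹ = 1 :=
  PowerSeries.mul_inv_cancel _ (by simp [constantCoeff_qPoch])

noncomputable def eulerCoeff (n : ℕ) : ℚ⟦X⟧ := qq ^ (n * (n + 1) / 2) * (qPoch n)⁻¹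

noncomputable def eulerSeries : ℚ⟦X⟧⟦X⟧ := mk eulerCoeff

theorem eulerCoeff_succ (n : ℕ) :
    eulerCoeff (n + 1) = qq ^ (n + 1) * eulerCoeff (n + 1) + qq ^ (n + 1) * eulerCoeff n := by
  apply IsFractionRing.injective ℚ⟦X⟧ (FractionRing ℚ⟦X⟧)
  simp only [eulerCoeff, Nat.succ_mul_succ_add_one_div_two, map_add, map_mul, map_pow,
    algebraMap_qPoch_inv, algebraMap_qPoch_succ]
  field_simp [algebraMap_qPoch_ne_zero, one_sub_algebraMap_qq_pow_ne_zero]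
  ring

theorem eulerSeries_eq_mul_rescale :
    eulerSeries = (1 + C qq * X) * rescale qq eulerSeries := by
  refine PowerSeries.ext fun n => ?_
  rw [add_mul, one_mul, map_add, mul_comm (C qq), mul_assoc, coeff_rescale]
  cases n with
  | zero => simp [eulerSeries, eulerCoeff, qPoch]
  | succ n =>
    rw [coeff_succ_X_mul, coeff_C_mul, coeff_rescale, eulerSeries, coeff_mk, coeff_mk,
      ← mul_assoc, ← pow_succ']
    exact eulerCoeff_succ n

noncomputable def eulerProd (j : ℕ) : ℚ⟦X⟧⟦X⟧ := ∏ m ∈ range j, (1 + C (qq ^ (m + 1)) * X)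

theorem eulerSeries_eq_eulerProd_mul (j : ℕ) :
    eulerSeries = eulerProd j * rescale (qq ^ j) eulerSeries := by
  induction j with
  | zero => simp [eulerProd, rescale_one]
  | succ j ih =>
    conv_lhs => rw [ih, eulerSeries_eq_mul_rescale]
    rw [map_mul, rescale_one_add_C_mul_X, rescale_rescale, eulerProd, eulerProd,
      prod_range_succ, ← pow_succ', mul_assoc]

noncomputable def qBinom (j u : ℕ) : ℚ⟦X⟧ := qPoch j * (qPoch u)⁻¹ * (qPoch (j - u))⁻¹

noncomputable def eulerProdCoeff (j u : ℕ) : ℚ⟦X⟧ :=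
  if u ≤ j then qq ^ (u * (u + 1) / 2) * qBinom j u else 0

theorem qBinom_zero_right (j : ℕ) : qBinom j 0 = 1 := by
  rw [qBinom, Nat.sub_zero, qPoch_zero, inv_one, mul_one, qPoch_mul_inv]

theorem qBinom_self (j : ℕ) : qBinom j j = 1 := by
  rw [qBinom, Nat.sub_self, qPoch_zero, inv_one, mul_one, qPoch_mul_inv]

theorem eulerProdCoeff_zero_right (j : ℕ) : eulerProdCoeff j 0 = 1 := by
  simp [eulerProdCoeff, qBinom_zero_right]

theorem eulerProdCoeff_succ_succ (j i : ℕ) :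
    eulerProdCoeff (j + 1) (i + 1)
      = eulerProdCoeff j (i + 1) + qq ^ (j + 1) * eulerProdCoeff j i := by
  rcases lt_trichotomy i j with h | rfl | h
  · obtain ⟨w, rfl⟩ : ∃ w, j = i + 1 + w := ⟨j - i - 1, by omega⟩
    simp only [eulerProdCoeff, if_pos (by omega : i + 1 ≤ i + 1 + w + 1),
      if_pos (by omega : i + 1 ≤ i + 1 + w), if_pos (by omega : i ≤ i + 1 + w), qBinom,
      show i + 1 + w + 1 - (i + 1) = w + 1 by omega, show i + 1 + w - (i + 1) = w by omega,
      show i + 1 + w - i = w + 1 by omega, Nat.succ_mul_succ_add_one_div_two]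
    apply IsFractionRing.injective ℚ⟦X⟧ (FractionRing ℚ⟦X⟧)
    simp only [map_add, map_mul, map_pow, algebraMap_qPoch_inv, algebraMap_qPoch_succ]
    field_simp [algebraMap_qPoch_ne_zero, one_sub_algebraMap_qq_pow_ne_zero]
    ring
  · simp only [eulerProdCoeff, if_pos le_rfl, if_neg (by omega : ¬ i + 1 ≤ i), qBinom_self,
      Nat.succ_mul_succ_add_one_div_two]
    ring
  · simp [eulerProdCoeff, show ¬ i + 1 ≤ j + 1 by omega, show ¬ i + 1 ≤ j by omega,
      show ¬ i ≤ j by omega]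

theorem eulerProd_eq_mk (j : ℕ) : eulerProd j = mk (eulerProdCoeff j) := by
  induction j with
  | zero =>
    refine PowerSeries.ext fun n => ?_
    cases n <;> simp [eulerProd, eulerProdCoeff, qBinom_self]
  | succ j ih =>
    refine PowerSeries.ext fun n => ?_
    rw [eulerProd, prod_range_succ, ← eulerProd, ih, mul_add, mul_one, ← mul_assoc, map_add]
    cases n with
    | zero => simp [eulerProdCoeff_zero_right]
    | succ n => rw [coeff_succ_mul_X, mul_comm, coeff_C_mul, coeff_mk, coeff_mk, coeff_mk,
        eulerProdCoeff_succ_succ]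

theorem eulerCoeff_eq_sum (j m : ℕ) :
    eulerCoeff m = ∑ u ∈ range (m + 1),
      eulerProdCoeff j u * ((qq ^ j) ^ (m - u) * eulerCoeff (m - u)) := by
  conv_lhs => rw [← coeff_mk m eulerCoeff, ← eulerSeries, eulerSeries_eq_eulerProd_mul j]
  rw [coeff_mul, Nat.sum_antidiagonal_eq_sum_range_succ_mk, eulerProd_eq_mk]
  simp only [coeff_mk, coeff_rescale, eulerSeries]

noncomputable def gCoeff (n : ℕ) : ℚ⟦X⟧ := qq ^ (n * (n + 1)) * (qPoch n)⁻¹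

theorem coeff_Gser (n : ℕ) : coeff n Gser = if 2 ∣ n then gCoeff (n / 2) else 0 := by
  rw [Gser, coeff_mk, gCoeff]

theorem coeff_eulerSeries_mul_Gser (n : ℕ) :
    coeff n (eulerSeries * Gser)
      = ∑ j ∈ range (n / 2 + 1), gCoeff j * eulerCoeff (n - 2 * j) := by
  have h_even : (range (n + 1)).filter (2 ∣ ·) =
      (range (n / 2 + 1)).map ⟨(2 * ·), mul_right_injective₀ two_ne_zero⟩ := by
    ext l; simp only [mem_filter, mem_range, mem_map, Function.Embedding.coeFn_mk]
    constructor
    · rintro ⟨hl, j, rfl⟩; exact ⟨j, by omega, rfl⟩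
    · rintro ⟨j, hj, rfl⟩; exact ⟨by omega, j, rfl⟩
  rw [mul_comm, coeff_mul, Nat.sum_antidiagonal_eq_sum_range_succ_mk]
  simp only [coeff_Gser, eulerSeries, coeff_mk, ite_mul, zero_mul]
  rw [← sum_filter, h_even, sum_map]
  simp

theorem summand_exponent_eq (s t u : ℕ) :
    s * (s + 1) / 2 + t * (t + 1) + 3 * (u * (u + 1) / 2) + s * t + s * u + 2 * t * u
      = (t + u) * (t + u + 1) + u * (u + 1) / 2 + (t + u) * s + s * (s + 1) / 2 := by
  have hs := (Nat.even_mul_succ_self s).two_dvd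
  have hu := (Nat.even_mul_succ_self u).two_dvd
  rw [show (t + u) * (t + u + 1) = t * (t + 1) + u * (u + 1) + 2 * t * u by ring,
    show (t + u) * s = s * t + s * u by ring]
  omega

theorem fcoef_summand_eq (s t u : ℕ) :
    qq ^ (s * (s + 1) / 2 + t * (t + 1) + 3 * (u * (u + 1) / 2) + s * t + s * u
          + 2 * t * u) * (qPoch s)⁻¹ * (qPoch t)⁻¹ * (qPoch u)⁻¹
      = gCoeff (t + u) * (eulerProdCoeff (t + u) u * ((qq ^ (t + u)) ^ s * eulerCoeff s)) := by
  rw [eulerProdCoeff, if_pos (by omega), summand_exponent_eq, qBinom, Nat.add_sub_cancel]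
  apply IsFractionRing.injective ℚ⟦X⟧ (FractionRing ℚ⟦X⟧)
  simp only [gCoeff, eulerCoeff, map_mul, map_pow, algebraMap_qPoch_inv]
  have := algebraMap_qPoch_ne_zero (t + u)
  field_simp
  ring

theorem fcoef_eq_sum (n : ℕ) :
    fcoef n = ∑ j ∈ range (n / 2 + 1), gCoeff j * eulerCoeff (n - 2 * j) := by
  refine (sum_range_reindex_two_three n _).trans (sum_congr rfl fun j hj => ?_)
  rw [eulerCoeff_eq_sum j, mul_sum]
  refine sum_congr rfl fun u hu => ?_
  split_ifs with hu_le
  · have h := fcoef_summand_eq (n - 2 * j - u) (j - u) u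
    rw [Nat.sub_add_cancel hu_le] at h
    rw [← h, show n - 2 * (j - u) - 3 * u = n - 2 * j - u by simp at hj hu; omega]
  · simp [eulerProdCoeff, hu_le]

theorem Fser_eq_eulerSeries_mul_Gser : Fser = eulerSeries * Gser :=
  PowerSeries.ext fun n => by rw [Fser, coeff_mk, fcoef_eq_sum, coeff_eulerSeries_mul_Gser]

theorem gCoeff_one : gCoeff 1 = qq ^ 2 * gCoeff 1 + (qq ^ 2 + qq ^ 3) * gCoeff 0 := by
  apply IsFractionRing.injective ℚ⟦X⟧ (FractionRing ℚ⟦X⟧)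
  have h := one_sub_algebraMap_qq_pow_ne_zero 0
  simp only [gCoeff, map_add, map_mul, map_pow, algebraMap_qPoch_inv, algebraMap_qPoch_succ,
    qPoch_zero, inv_one, map_one, zero_add, pow_one, one_mul] at h ⊢
  field_simp
  ring

theorem gCoeff_add_two (i : ℕ) :
    gCoeff (i + 2) = qq ^ (2 * i + 4) * gCoeff (i + 2)
      + (qq ^ 2 + qq ^ 3) * (qq ^ (2 * i + 2) * gCoeff (i + 1))
      - qq ^ 7 * ((qq ^ 2) ^ (2 * i) * gCoeff i) := by
  apply IsFractionRing.injective ℚ⟦X⟧ (FractionRing ℚ⟦X⟧)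
  simp only [gCoeff, map_add, map_sub, map_mul, map_pow, algebraMap_qPoch_inv,
    algebraMap_qPoch_succ]
  field_simp [algebraMap_qPoch_ne_zero, one_sub_algebraMap_qq_pow_ne_zero]
  ring

theorem Gser_q_difference : Gser = (1 + C (qq ^ 2 + qq ^ 3) * X ^ 2) * rescale qq Gser
    - C (qq ^ 7) * X ^ 4 * rescale (qq ^ 2) Gser := by
  refine PowerSeries.ext fun n => ?_
  rw [show (1 + C (qq ^ 2 + qq ^ 3) * X ^ 2) * rescale qq Gser
      - C (qq ^ 7) * X ^ 4 * rescale (qq ^ 2) Gser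
    = rescale qq Gser + X ^ 2 * (C (qq ^ 2 + qq ^ 3) * rescale qq Gser)
      - X ^ 4 * (C (qq ^ 7) * rescale (qq ^ 2) Gser) by ring]
  rw [map_sub, map_add, coeff_X_pow_mul', coeff_X_pow_mul', coeff_C_mul, coeff_C_mul,
    coeff_rescale, coeff_rescale, coeff_rescale]
  simp only [coeff_Gser]
  obtain ⟨m, rfl | rfl⟩ := n.even_or_odd'
  · rcases m with _ | _ | i
    · simp
    · simpa using gCoeff_one
    · rw [show 2 * (i + 1 + 1) = 2 * i + 4 by ring]
      simp only [show 2 * i + 4 - 2 = 2 * i + 2 by omega, Nat.add_sub_cancel,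
        show (2 * i + 4) / 2 = i + 2 by omega, show (2 * i + 2) / 2 = i + 1 by omega,
        show 2 * i / 2 = i by omega, show 2 ∣ 2 * i + 4 from ⟨i + 2, by ring⟩,
        show 2 ∣ 2 * i + 2 from ⟨i + 1, by ring⟩, show 2 ∣ 2 * i from ⟨i, rfl⟩,
        show 2 ≤ 2 * i + 4 by omega, show 4 ≤ 2 * i + 4 by omega, if_true]
      exact gCoeff_add_two i
  · split_ifs <;> first | omega | simp

theorem eulerSeries_eq_mul_rescale_sq :
    eulerSeries = (1 + C qq * X) * (1 + C (qq ^ 2) * X) * rescale (qq ^ 2) eulerSeries := by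
  simpa [eulerProd, prod_range_succ] using eulerSeries_eq_eulerProd_mul 2

/-- `F(x,q) = (1+xq)(1 + x²q² + x²q³) F(xq,q) - x⁴q⁷(1+xq)(1+xq²) F(xq²,q)`;
the substitution `x ↦ xq` is `PowerSeries.rescale q`. -/
theorem F_q_difference :
    Fser = (1 + PowerSeries.C qq * PowerSeries.X) *
          (1 + PowerSeries.C (qq ^ 2 + qq ^ 3) * PowerSeries.X ^ 2) *
          PowerSeries.rescale qq Fser -
        PowerSeries.C (qq ^ 7) * PowerSeries.X ^ 4 *
          (1 + PowerSeries.C qq * PowerSeries.X) *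
          (1 + PowerSeries.C (qq ^ 2) * PowerSeries.X) *
          PowerSeries.rescale (qq ^ 2) Fser := by
  rw [Fser_eq_eulerSeries_mul_Gser, map_mul, map_mul]
  linear_combination eulerSeries * Gser_q_difference
    + (1 + C (qq ^ 2 + qq ^ 3) * X ^ 2) * rescale qq Gser * eulerSeries_eq_mul_rescale
    - C (qq ^ 7) * X ^ 4 * rescale (qq ^ 2) Gser * eulerSeries_eq_mul_rescale_sq
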